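/- If the sequence (Aₘ)_{m∈ℤ} admits an exponential dichotomy with respect to the norms ‖·‖ₘ and B is an admissible Banach sequence space, then T_B : D(T_B) ⊂ Y_B → Y_B is bijective, i.e. for every y ∈ Y_B there is a unique x ∈ Y_B with xₙ − A_{n−1}x_{n−1} = yₙ for all n ∈ ℤ. -/

import Mathlib

/-- A Banach sequence space: a linear subspace of the real sequences indexed by `ℤ`,
with a norm that is monotone with respect to pointwise absolute value, and complete. -/
structure BanachSeqSpace where
  mem : (ℤ → ℝ) → Prop
  bnorm : (ℤ → ℝ) → ℝ
  zero_mem : mem 0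
  add_mem : ∀ {s t : ℤ → ℝ}, mem s → mem t → mem (s + t)
  smul_mem : ∀ (c : ℝ) {s : ℤ → ℝ}, mem s → mem (c • s)
  bnorm_nonneg : ∀ s : ℤ → ℝ, 0 ≤ bnorm s
  bnorm_eq_zero : ∀ {s : ℤ → ℝ}, mem s → (bnorm s = 0 ↔ s = 0)
  bnorm_add_le : ∀ {s t : ℤ → ℝ}, mem s → mem t → bnorm (s + t) ≤ bnorm s + bnorm t
  bnorm_smul : ∀ (c : ℝ) (s : ℤ → ℝ), bnorm (c • s) = |c| * bnorm s
  mono_mem : ∀ {s t : ℤ → ℝ}, mem t → (∀ n, |s n| ≤ |t n|) → mem s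
  mono_norm : ∀ {s t : ℤ → ℝ}, mem t → (∀ n, |s n| ≤ |t n|) → bnorm s ≤ bnorm t
  complete : ∀ u : ℕ → ℤ → ℝ, (∀ k, mem (u k)) →
    (∀ ε : ℝ, 0 < ε → ∃ K : ℕ, ∀ k l, K ≤ k → K ≤ l → bnorm (u k - u l) < ε) →
    ∃ s : ℤ → ℝ, mem s ∧ ∀ ε : ℝ, 0 < ε → ∃ K : ℕ, ∀ k, K ≤ k → bnorm (u k - s) < ε

/-- An admissible Banach sequence space: contains the characteristic functions of
singletons with positive norm, and is invariant under shifts with a uniform bound `N`. -/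
structure AdmissibleSeqSpace extends BanachSeqSpace where
  N : ℝ
  N_pos : 0 < N
  indicator_mem : ∀ n : ℤ, mem (fun k => if k = n then (1 : ℝ) else 0)
  indicator_pos : ∀ n : ℤ, 0 < bnorm (fun k => if k = n then (1 : ℝ) else 0)
  shift_mem : ∀ {s : ℤ → ℝ}, mem s → ∀ m : ℤ, mem (fun n => s (n + m))
  shift_norm : ∀ {s : ℤ → ℝ}, mem s → ∀ m : ℤ, bnorm (fun n => s (n + m)) ≤ N * bnorm s

/-- `opComp A k m` is the composition `A(m+k, m) = A_{m+k-1} ∘ ⋯ ∘ A_m`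
(the identity when `k = 0`). -/
def opComp {X : Type*} [NormedAddCommGroup X] [NormedSpace ℝ X]
    (A : ℤ → X →L[ℝ] X) : ℕ → ℤ → X →L[ℝ] X
  | 0, _ => ContinuousLinearMap.id ℝ X
  | k + 1, m => (A (m + k)).comp (opComp A k m)

/-!
The solution is given by the Green's function of the dichotomy,
`xₙ = ∑_{k ≥ 0} A(n, n-k) P_{n-k} y_{n-k} - ∑_{k ≥ 1} A(n+k, n)|_{ker P}⁻¹ Q_{n+k} y_{n+k}`.
The dichotomy estimates dominate `‖xₙ‖ₙ` by `D ∑ λᵏ ‖y_{n-k}‖_{n-k} + D ∑ μ⁻ᵏ ‖y_{n+k}‖_{n+k}`,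
a series of shifts of `(‖yₙ‖ₙ)` whose norms in `B` are summable by shift invariance, so it
converges in `B` by completeness. For uniqueness, a bounded solution `z` of `zₙ = A_{n-1} z_{n-1}`
has stable part `Pₙ zₙ = A(n, n-k) P_{n-k} z_{n-k}` of size `O(λᵏ)` and unstable part
`Qₙ zₙ = A(n+k, n)|_{ker P}⁻¹ Q_{n+k} z_{n+k}` of size `O(μ⁻ᵏ)` for every `k`, hence `z = 0`.
-/

open Filter Topology

lemma nonpos_of_forall_le_mul_pow {a C q : ℝ} (hq0 : 0 ≤ q) (hq1 : q < 1)
    (h : ∀ k : ℕ, a ≤ C * q ^ k) : a ≤ 0 := by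
  have hlim : Tendsto (fun k : ℕ => C * q ^ k) atTop (𝓝 0) := by
    simpa using (tendsto_pow_atTop_nhds_zero_of_lt_one hq0 hq1).const_mul C
  exact ge_of_tendsto hlim (Eventually.of_forall h)

lemma summable_pow_mul_of_bounded {q M : ℝ} {u : ℕ → ℝ} (hq0 : 0 ≤ q) (hq1 : q < 1)
    (hu0 : ∀ k, 0 ≤ u k) (huM : ∀ k, u k ≤ M) : Summable fun k => q ^ k * u k :=
  Summable.of_nonneg_of_le (fun k => by have := hu0 k; positivity)
    (fun k => mul_le_mul_of_nonneg_left (huM k) (by positivity))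
    ((summable_geometric_of_lt_one hq0 hq1).mul_right M)

namespace BanachSeqSpace

variable (B : BanachSeqSpace)

lemma bnorm_zero : B.bnorm 0 = 0 := (B.bnorm_eq_zero B.zero_mem).mpr rfl

lemma bnorm_neg (s : ℤ → ℝ) : B.bnorm (-s) = B.bnorm s := by
  simpa using B.bnorm_smul (-1) s

lemma sub_mem {s t : ℤ → ℝ} (hs : B.mem s) (ht : B.mem t) : B.mem (s - t) := by
  simpa [sub_eq_add_neg] using B.add_mem hs (B.smul_mem (-1) ht)

lemma sum_mem {ι : Type*} {f : ι → ℤ → ℝ} (hf : ∀ i, B.mem (f i)) (F : Finset ι) :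
    B.mem (∑ i ∈ F, f i) :=
  Finset.sum_induction f B.mem (fun _ _ => B.add_mem) B.zero_mem fun i _ => hf i

lemma bnorm_sum_le {ι : Type*} {f : ι → ℤ → ℝ} (hf : ∀ i, B.mem (f i)) (F : Finset ι) :
    B.bnorm (∑ i ∈ F, f i) ≤ ∑ i ∈ F, B.bnorm (f i) :=
  Finset.le_sum_of_subadditive_on_pred B.bnorm B.mem B.bnorm_zero.le
    (fun _ _ => B.bnorm_add_le) (fun _ _ => B.add_mem) f fun i _ => hf i

end BanachSeqSpace

namespace AdmissibleSeqSpace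

variable (B : AdmissibleSeqSpace)

lemma abs_apply_le {s : ℤ → ℝ} (hs : B.mem s) (n : ℤ) :
    |s n| ≤ B.N / B.bnorm (fun k => if k = 0 then 1 else 0) * B.bnorm s := by
  set e : ℤ → ℤ → ℝ := fun m k => if k = m then 1 else 0
  have h_shift : B.bnorm (e 0) ≤ B.N * B.bnorm (e n) := by
    have he : (fun k => e n (k + n)) = e 0 := by
      funext k
      simp [e]
    simpa [he] using B.shift_norm (B.indicator_mem n) n
  have h_mono : |s n| * B.bnorm (e n) ≤ B.bnorm s := by
    have h := B.mono_norm (s := |s n| • e n) hs fun k => by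
      by_cases hk : k = n <;> simp [e, hk]
    rwa [B.bnorm_smul, abs_abs] at h
  rw [div_mul_eq_mul_div, le_div_iff₀ (B.indicator_pos 0)]
  calc |s n| * B.bnorm (e 0) ≤ |s n| * (B.N * B.bnorm (e n)) := by gcongr
    _ = B.N * (|s n| * B.bnorm (e n)) := by ring
    _ ≤ B.N * B.bnorm s := by gcongr; exact B.N_pos.le

lemma exists_forall_le {s : ℤ → ℝ} (hs : B.mem s) : ∃ M, ∀ n, s n ≤ M :=
  ⟨_, fun n => (le_abs_self _).trans (B.abs_apply_le hs n)⟩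

lemma tsum_mem {f : ℕ → ℤ → ℝ} (hf : ∀ k, B.mem (f k))
    (hsum : Summable fun k => B.bnorm (f k)) : B.mem fun n => ∑' k, f k n := by
  set S : ℕ → ℤ → ℝ := fun K => ∑ k ∈ Finset.range K, f k
  set R : ℕ → ℝ := fun K => ∑ k ∈ Finset.range K, B.bnorm (f k)
  have hS : ∀ K, B.mem (S K) := fun K => B.sum_mem hf _
  have hSR : ∀ k l, l ≤ k → B.bnorm (S k - S l) ≤ dist (R k) (R l) := by
    intro k l hlk
    calc B.bnorm (S k - S l) = B.bnorm (∑ i ∈ Finset.Ico l k, f i) := by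
          rw [Finset.sum_Ico_eq_sub f hlk]
      _ ≤ R k - R l := by
          rw [← Finset.sum_Ico_eq_sub _ hlk]
          exact B.bnorm_sum_le hf _
      _ ≤ dist (R k) (R l) := le_abs_self _
  have hcauchy : ∀ ε : ℝ, 0 < ε → ∃ K : ℕ, ∀ k l, K ≤ k → K ≤ l → B.bnorm (S k - S l) < ε := by
    intro ε hε
    obtain ⟨K, hK⟩ := Metric.cauchySeq_iff.mp hsum.hasSum.tendsto_sum_nat.cauchySeq ε hε
    refine ⟨K, fun k l hk hl => ?_⟩
    rcases le_total l k with h | h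
    · exact (hSR k l h).trans_lt (hK k hk l hl)
    · rw [← neg_sub, B.bnorm_neg]
      exact (hSR l k h).trans_lt (hK l hl k hk)
  obtain ⟨t, ht, hlim⟩ := B.complete S hS hcauchy
  convert ht using 1
  funext n
  set c := B.N / B.bnorm (fun k => if k = 0 then 1 else 0)
  have hpt : Summable fun k => f k n :=
    Summable.of_norm_bounded (hsum.mul_left c) fun k => B.abs_apply_le (hf k) n
  have hSn : Tendsto (fun K => S K n) atTop (𝓝 (t n)) := by
    have hbnorm : Tendsto (fun K => B.bnorm (S K - t)) atTop (𝓝 0) :=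
      Metric.tendsto_atTop.mpr fun ε hε => (hlim ε hε).imp fun K hK k hk => by
        simpa [abs_of_nonneg (B.bnorm_nonneg _)] using hK k hk
    refine tendsto_iff_dist_tendsto_zero.mpr
      (squeeze_zero (fun _ => dist_nonneg) (fun K => ?_) (by simpa using hbnorm.const_mul c))
    rw [Real.dist_eq]
    exact B.abs_apply_le (B.sub_mem (hS K) ht) n
  exact tendsto_nhds_unique (by simpa [S] using hpt.hasSum.tendsto_sum_nat) hSn

lemma mem_tsum_pow_mul_shift {s : ℤ → ℝ} (hs : B.mem s) {q : ℝ} (hq0 : 0 ≤ q) (hq1 : q < 1)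
    (σ : ℕ → ℤ) : B.mem fun n => ∑' k, q ^ k * s (n + σ k) := by
  refine B.tsum_mem (fun k => B.smul_mem (q ^ k) (B.shift_mem hs (σ k))) ?_
  refine Summable.of_nonneg_of_le (fun k => B.bnorm_nonneg _) (fun k => ?_)
    ((summable_geometric_of_lt_one hq0 hq1).mul_right (B.N * B.bnorm s))
  calc B.bnorm (q ^ k • fun n => s (n + σ k))
      = q ^ k * B.bnorm (fun n => s (n + σ k)) := by
        rw [B.bnorm_smul, abs_of_nonneg (by positivity)]
    _ ≤ q ^ k * (B.N * B.bnorm s) := by gcongr; exact B.shift_norm hs _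

end AdmissibleSeqSpace

section

variable {X : Type*} [NormedAddCommGroup X] [NormedSpace ℝ X]

structure IsEquivNorm (p : X → ℝ) : Prop where
  add_le : ∀ u v, p (u + v) ≤ p u + p v
  smul : ∀ (c : ℝ) v, p (c • v) = |c| * p v
  equiv : ∃ c C : ℝ, 0 < c ∧ ∀ v, c * ‖v‖ ≤ p v ∧ p v ≤ C * ‖v‖

namespace IsEquivNorm

variable {p : X → ℝ}

lemma map_zero (hp : IsEquivNorm p) : p 0 = 0 := by
  simpa using hp.smul 0 0

lemma nonneg (hp : IsEquivNorm p) (v : X) : 0 ≤ p v := by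
  obtain ⟨c, C, hc, hcC⟩ := hp.equiv
  exact le_trans (by positivity) (hcC v).1

lemma eq_zero_of_nonpos (hp : IsEquivNorm p) {v : X} (hv : p v ≤ 0) : v = 0 := by
  obtain ⟨c, C, hc, hcC⟩ := hp.equiv
  have : c * ‖v‖ ≤ c * 0 := by simpa using (hcC v).1.trans hv
  exact norm_le_zero_iff.mp (le_of_mul_le_mul_left this hc)

lemma map_neg (hp : IsEquivNorm p) (v : X) : p (-v) = p v := by
  simpa using hp.smul (-1) v

lemma map_sub_le (hp : IsEquivNorm p) (u v : X) : p (u - v) ≤ p u + p v := by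
  simpa [sub_eq_add_neg, hp.map_neg] using hp.add_le u (-v)

lemma continuous (hp : IsEquivNorm p) : Continuous p := by
  obtain ⟨c, C, -, hcC⟩ := hp.equiv
  refine (LipschitzWith.of_le_add_mul' C fun u v => ?_).continuous
  calc p u = p (u - v + v) := by rw [sub_add_cancel]
    _ ≤ p (u - v) + p v := hp.add_le _ _
    _ ≤ p v + C * dist u v := by rw [dist_eq_norm]; linarith [(hcC (u - v)).2]

lemma map_tsum_le (hp : IsEquivNorm p) {ι : Type*} {f : ι → X} {g : ι → ℝ} (hf : Summable f)
    (hg : Summable g) (hfg : ∀ i, p (f i) ≤ g i) : p (∑' i, f i) ≤ ∑' i, g i := by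
  refine le_of_tendsto' ((hp.continuous.tendsto _).comp hf.hasSum) fun s => ?_
  calc p (∑ i ∈ s, f i) ≤ ∑ i ∈ s, p (f i) :=
        Finset.le_sum_of_subadditive p hp.map_zero.le hp.add_le s f
    _ ≤ ∑ i ∈ s, g i := Finset.sum_le_sum fun i _ => hfg i
    _ ≤ ∑' i, g i := hg.sum_le_tsum s fun i _ => (hp.nonneg _).trans (hfg i)

lemma summable_of_le_geometric [CompleteSpace X] (hp : IsEquivNorm p) {f : ℕ → X} {a q : ℝ}
    (hq0 : 0 ≤ q) (hq1 : q < 1) (hf : ∀ k, p (f k) ≤ a * q ^ k) : Summable f := by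
  obtain ⟨c, C, hc, hcC⟩ := hp.equiv
  refine Summable.of_norm_bounded
    (((summable_geometric_of_lt_one hq0 hq1).mul_left a).div_const c) fun k => ?_
  rw [le_div_iff₀' hc]
  exact (hcC _).1.trans (hf k)

end IsEquivNorm

section opComp

variable {A : ℤ → X →L[ℝ] X}

lemma opComp_succ_apply (k : ℕ) (m : ℤ) (v : X) :
    opComp A (k + 1) m v = opComp A k (m + 1) (A m v) := by
  induction k generalizing m v with
  | zero => simp [opComp]
  | succ k ih =>
    change A (m + (k + 1 : ℕ)) (opComp A (k + 1) m v) = A (m + 1 + k) (opComp A k (m + 1) (A m v))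
    rw [ih]
    congr 2
    push_cast
    ring

lemma opComp_apply_of_forall_eq {z : ℤ → X} (hz : ∀ n, z n = A (n - 1) (z (n - 1)))
    (k : ℕ) (n : ℤ) : opComp A k (n - k) (z (n - k)) = z n := by
  induction k generalizing n with
  | zero => simp [opComp]
  | succ k ih =>
    rw [opComp_succ_apply, show n - (k + 1 : ℕ) + 1 = n - k by push_cast; ring,
      show n - (k + 1 : ℕ) = n - k - 1 by push_cast; ring, ← hz, ih]

lemma opComp_apply_commute {P : ℤ → X →L[ℝ] X} (hcomm : ∀ m v, A m (P m v) = P (m + 1) (A m v))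
    (k : ℕ) (m : ℤ) (v : X) : opComp A k m (P m v) = P (m + k) (opComp A k m v) := by
  induction k with
  | zero => simp [opComp]
  | succ k ih =>
    change A (m + k) (opComp A k m (P m v)) = P (m + (k + 1 : ℕ)) (A (m + k) (opComp A k m v))
    rw [ih, hcomm]
    push_cast
    ring_nf

lemma injOn_opComp {P : ℤ → X →L[ℝ] X} (hcomm : ∀ m v, A m (P m v) = P (m + 1) (A m v))
    (hinj : ∀ m, Set.InjOn (A m) {v | P m v = 0}) (k : ℕ) (m : ℤ) :
    Set.InjOn (opComp A k m) {v | P m v = 0} := by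
  induction k generalizing m with
  | zero => exact fun v _ w _ h => h
  | succ k ih =>
    intro v hv w hw h
    have hA : ∀ u, P m u = 0 → P (m + 1) (A m u) = 0 := fun u hu => by
      rw [← hcomm, hu, map_zero]
    rw [opComp_succ_apply, opComp_succ_apply] at h
    exact hinj m hv hw (ih (m + 1) (hA v hv) (hA w hw) h)

end opComp

/-- `Ainv k m` is the inverse of `opComp A k (m - k)` restricted to `ker P (m - k)`. -/
structure IsExpDichotomy (A : ℤ → X →L[ℝ] X) (nn : ℤ → X → ℝ) (P : ℤ → X →L[ℝ] X)
    (Ainv : ℕ → ℤ → X → X) (D lam mu : ℝ) : Prop where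
  norm : ∀ n, IsEquivNorm (nn n)
  proj : ∀ m v, P m (P m v) = P m v
  comm : ∀ m v, A m (P m v) = P (m + 1) (A m v)
  injOn : ∀ m, Set.InjOn (A m) {v | P m v = 0}
  D_nonneg : 0 ≤ D
  lam_nonneg : 0 ≤ lam
  lam_lt_one : lam < 1
  one_lt_mu : 1 < mu
  stable : ∀ m v (k : ℕ), nn (m + k) (opComp A k m (P m v)) ≤ D * lam ^ k * nn m v
  inv_ker : ∀ (k : ℕ) m v, P m v = 0 → P (m - k) (Ainv k m v) = 0
  opComp_inv : ∀ (k : ℕ) m v, P m v = 0 → opComp A k (m - k) (Ainv k m v) = v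
  unstable : ∀ (k : ℕ) m v, nn (m - k) (Ainv k m (v - P m v)) ≤ D * (mu ^ k)⁻¹ * nn m v

def greenStable (A P : ℤ → X →L[ℝ] X) (y : ℤ → X) (n : ℤ) (k : ℕ) : X :=
  opComp A k (n - k) (P (n - k) (y (n - k)))

def greenUnstable (P : ℤ → X →L[ℝ] X) (Ainv : ℕ → ℤ → X → X) (y : ℤ → X) (n : ℤ) (k : ℕ) : X :=
  Ainv k (n + k) (y (n + k) - P (n + k) (y (n + k)))

noncomputable def greenSol (A P : ℤ → X →L[ℝ] X) (Ainv : ℕ → ℤ → X → X) (y : ℤ → X) (n : ℤ) : X :=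
  ∑' k, greenStable A P y n k - ∑' k, greenUnstable P Ainv y n (k + 1)

lemma greenStable_zero (A P : ℤ → X →L[ℝ] X) (y : ℤ → X) (n : ℤ) :
    greenStable A P y n 0 = P n (y n) := by
  simp [greenStable, opComp]

lemma greenStable_succ (A P : ℤ → X →L[ℝ] X) (y : ℤ → X) (n : ℤ) (k : ℕ) :
    greenStable A P y n (k + 1) = A (n - 1) (greenStable A P y (n - 1) k) := by
  change A (n - (k + 1 : ℕ) + k) _ = A (n - 1) (opComp A k (n - 1 - k) _)
  rw [show n - (k + 1 : ℕ) = n - 1 - k by push_cast; ring, sub_add_cancel]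
  rfl

namespace IsExpDichotomy

variable {A : ℤ → X →L[ℝ] X} {nn : ℤ → X → ℝ} {P : ℤ → X →L[ℝ] X} {Ainv : ℕ → ℤ → X → X}
  {D lam mu : ℝ}

lemma mu_inv_nonneg (h : IsExpDichotomy A nn P Ainv D lam mu) : 0 ≤ mu⁻¹ :=
  inv_nonneg.mpr (zero_le_one.trans h.one_lt_mu.le)

lemma mu_inv_lt_one (h : IsExpDichotomy A nn P Ainv D lam mu) : mu⁻¹ < 1 :=
  inv_lt_one_of_one_lt₀ h.one_lt_mu

lemma P_apply_sub_P_apply (h : IsExpDichotomy A nn P Ainv D lam mu) (m : ℤ) (v : X) :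
    P m (v - P m v) = 0 := by
  rw [map_sub, h.proj, sub_self]

lemma eq_inv_of_opComp_eq (h : IsExpDichotomy A nn P Ainv D lam mu) {k : ℕ} {m : ℤ} {v w : X}
    (hv : P m v = 0) (hw : P (m - k) w = 0) (hwv : opComp A k (m - k) w = v) :
    w = Ainv k m v :=
  injOn_opComp h.comm h.injOn k (m - k) hw (h.inv_ker k m v hv) (by rw [hwv, h.opComp_inv k m v hv])

lemma inv_zero_apply (h : IsExpDichotomy A nn P Ainv D lam mu) {m : ℤ} {v : X} (hv : P m v = 0) :
    Ainv 0 m v = v := by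
  simpa [opComp] using h.opComp_inv 0 m v hv

lemma apply_inv_succ (h : IsExpDichotomy A nn P Ainv D lam mu) {k : ℕ} {m : ℤ} {v : X}
    (hv : P m v = 0) : A (m - k - 1) (Ainv (k + 1) m v) = Ainv k m v := by
  have e : m - (k + 1 : ℕ) = m - k - 1 := by push_cast; ring
  have hker := h.inv_ker (k + 1) m v hv
  have hcomp := h.opComp_inv (k + 1) m v hv
  rw [e] at hker hcomp
  refine h.eq_inv_of_opComp_eq hv ?_ ?_
  · have hc := h.comm (m - k - 1) (Ainv (k + 1) m v)
    rw [sub_add_cancel] at hc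
    rw [← hc, hker, map_zero]
  · have hs := opComp_succ_apply (A := A) k (m - k - 1) (Ainv (k + 1) m v)
    rw [sub_add_cancel] at hs
    rwa [← hs]

lemma eq_zero_of_bounded (h : IsExpDichotomy A nn P Ainv D lam mu) {z : ℤ → X} {M : ℝ}
    (hz : ∀ n, z n = A (n - 1) (z (n - 1))) (hM : ∀ n, nn n (z n) ≤ M) (n : ℤ) : z n = 0 := by
  have hPz : P n (z n) = 0 := by
    refine (h.norm n).eq_zero_of_nonpos (nonpos_of_forall_le_mul_pow (C := D * M)
      h.lam_nonneg h.lam_lt_one fun k => ?_)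
    have hstable := h.stable (n - k) (z (n - k)) k
    rw [opComp_apply_commute h.comm, opComp_apply_of_forall_eq hz, sub_add_cancel] at hstable
    calc nn n (P n (z n)) ≤ D * lam ^ k * nn (n - k) (z (n - k)) := hstable
      _ ≤ D * lam ^ k * M := by
          gcongr; exacts [mul_nonneg h.D_nonneg (pow_nonneg h.lam_nonneg k), hM _]
      _ = D * M * lam ^ k := by ring
  have hQz : z n - P n (z n) = 0 := by
    refine (h.norm n).eq_zero_of_nonpos (nonpos_of_forall_le_mul_pow (C := D * M)
      h.mu_inv_nonneg h.mu_inv_lt_one fun k => ?_)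
    have hinv : z n - P n (z n) = Ainv k (n + k) (z (n + k) - P (n + k) (z (n + k))) := by
      refine h.eq_inv_of_opComp_eq (h.P_apply_sub_P_apply _ _) ?_ ?_ <;> rw [add_sub_cancel_right]
      · exact h.P_apply_sub_P_apply _ _
      · have hzk := opComp_apply_of_forall_eq hz k (n + k)
        rw [add_sub_cancel_right] at hzk
        rw [map_sub, opComp_apply_commute h.comm, hzk]
    have hunstable := h.unstable k (n + k) (z (n + k))
    rw [add_sub_cancel_right, ← hinv, ← inv_pow] at hunstable
    calc nn n (z n - P n (z n)) ≤ D * mu⁻¹ ^ k * nn (n + k) (z (n + k)) := hunstable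
      _ ≤ D * mu⁻¹ ^ k * M := by
          gcongr; exacts [mul_nonneg h.D_nonneg (pow_nonneg h.mu_inv_nonneg k), hM _]
      _ = D * M * mu⁻¹ ^ k := by ring
  rw [← sub_add_cancel (z n) (P n (z n)), hQz, hPz, add_zero]

lemma greenUnstable_zero (h : IsExpDichotomy A nn P Ainv D lam mu) (y : ℤ → X) (n : ℤ) :
    greenUnstable P Ainv y n 0 = y n - P n (y n) := by
  simpa [greenUnstable] using h.inv_zero_apply (h.P_apply_sub_P_apply n (y n))

lemma apply_greenUnstable_succ (h : IsExpDichotomy A nn P Ainv D lam mu) (y : ℤ → X) (n : ℤ)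
    (k : ℕ) : A (n - 1) (greenUnstable P Ainv y (n - 1) (k + 1)) = greenUnstable P Ainv y n k := by
  have e : n - 1 + (k + 1 : ℕ) = n + k := by push_cast; ring
  have hA := h.apply_inv_succ (k := k) (h.P_apply_sub_P_apply (n + k) (y (n + k)))
  rw [add_sub_cancel_right] at hA
  rw [greenUnstable, e, hA, greenUnstable]

lemma nn_greenStable_le (h : IsExpDichotomy A nn P Ainv D lam mu) (y : ℤ → X) (n : ℤ) (k : ℕ) :
    nn n (greenStable A P y n k) ≤ D * lam ^ k * nn (n - k) (y (n - k)) := by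
  simpa [greenStable] using h.stable (n - k) (y (n - k)) k

lemma nn_greenUnstable_le (h : IsExpDichotomy A nn P Ainv D lam mu) (y : ℤ → X) (n : ℤ)
    (k : ℕ) : nn n (greenUnstable P Ainv y n k) ≤ D * mu⁻¹ ^ k * nn (n + k) (y (n + k)) := by
  simpa [greenUnstable, inv_pow] using h.unstable k (n + k) (y (n + k))

lemma summable_greenStable [CompleteSpace X] (h : IsExpDichotomy A nn P Ainv D lam mu)
    {y : ℤ → X} {M : ℝ} (hM : ∀ n, nn n (y n) ≤ M) (n : ℤ) : Summable (greenStable A P y n) :=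
  (h.norm n).summable_of_le_geometric (a := D * M) h.lam_nonneg h.lam_lt_one fun k =>
    calc nn n (greenStable A P y n k) ≤ D * lam ^ k * M :=
          (h.nn_greenStable_le y n k).trans <| by
            gcongr; exacts [mul_nonneg h.D_nonneg (pow_nonneg h.lam_nonneg k), hM _]
      _ = D * M * lam ^ k := by ring

lemma summable_greenUnstable [CompleteSpace X] (h : IsExpDichotomy A nn P Ainv D lam mu)
    {y : ℤ → X} {M : ℝ} (hM : ∀ n, nn n (y n) ≤ M) (n : ℤ) : Summable (greenUnstable P Ainv y n) :=
  (h.norm n).summable_of_le_geometric (a := D * M) h.mu_inv_nonneg h.mu_inv_lt_one fun k =>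
    calc nn n (greenUnstable P Ainv y n k) ≤ D * mu⁻¹ ^ k * M :=
          (h.nn_greenUnstable_le y n k).trans <| by
            gcongr; exacts [mul_nonneg h.D_nonneg (pow_nonneg h.mu_inv_nonneg k), hM _]
      _ = D * M * mu⁻¹ ^ k := by ring

lemma greenSol_sub_apply [CompleteSpace X] (h : IsExpDichotomy A nn P Ainv D lam mu)
    {y : ℤ → X} {M : ℝ} (hM : ∀ n, nn n (y n) ≤ M) (n : ℤ) :
    greenSol A P Ainv y n - A (n - 1) (greenSol A P Ainv y (n - 1)) = y n := by
  have hU : ∀ m, Summable fun k => greenUnstable P Ainv y m (k + 1) := fun m =>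
    (summable_nat_add_iff 1).mpr (h.summable_greenUnstable hM m)
  have hstable : ∑' k, greenStable A P y n k
      = P n (y n) + A (n - 1) (∑' k, greenStable A P y (n - 1) k) := by
    rw [(h.summable_greenStable hM n).tsum_eq_zero_add, greenStable_zero,
      (A (n - 1)).map_tsum (h.summable_greenStable hM (n - 1))]
    simp only [greenStable_succ]
  have hunstable : A (n - 1) (∑' k, greenUnstable P Ainv y (n - 1) (k + 1))
      = (y n - P n (y n)) + ∑' k, greenUnstable P Ainv y n (k + 1) := by
    rw [(A (n - 1)).map_tsum (hU (n - 1))]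
    simp only [h.apply_greenUnstable_succ]
    rw [(h.summable_greenUnstable hM n).tsum_eq_zero_add, h.greenUnstable_zero]
  rw [greenSol, greenSol, map_sub, hstable, hunstable]
  abel

lemma mem_greenSol [CompleteSpace X] (h : IsExpDichotomy A nn P Ainv D lam mu)
    (B : AdmissibleSeqSpace) {y : ℤ → X} (hy : B.mem fun n => nn n (y n)) :
    B.mem fun n => nn n (greenSol A P Ainv y n) := by
  set s : ℤ → ℝ := fun n => nn n (y n)
  obtain ⟨M, hM⟩ := B.exists_forall_le hy
  have hs0 : ∀ n, 0 ≤ s n := fun n => (h.norm n).nonneg _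
  set F₁ : ℤ → ℝ := fun n => ∑' k : ℕ, lam ^ k * s (n + -k)
  set F₂ : ℤ → ℝ := fun n => ∑' k : ℕ, mu⁻¹ ^ k * s (n + (k + 1 : ℕ))
  have hbound : ∀ n, nn n (greenSol A P Ainv y n) ≤ D * F₁ n + D * F₂ n := by
    intro n
    have hsum₁ := summable_pow_mul_of_bounded h.lam_nonneg h.lam_lt_one
      (fun k => hs0 (n + -k)) (fun k => hM (n + -k))
    have hsum₂ := summable_pow_mul_of_bounded h.mu_inv_nonneg h.mu_inv_lt_one
      (fun k => hs0 (n + (k + 1 : ℕ))) (fun k => hM (n + (k + 1 : ℕ)))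
    rw [← tsum_mul_left, ← tsum_mul_left]
    refine ((h.norm n).map_sub_le _ _).trans (add_le_add ?_ ?_)
    · refine (h.norm n).map_tsum_le (h.summable_greenStable hM n) (hsum₁.mul_left D) fun k => ?_
      rw [← mul_assoc, ← sub_eq_add_neg]
      exact h.nn_greenStable_le y n k
    · refine (h.norm n).map_tsum_le ((summable_nat_add_iff 1).mpr (h.summable_greenUnstable hM n))
        (hsum₂.mul_left D) fun k => (h.nn_greenUnstable_le y n (k + 1)).trans ?_
      rw [← mul_assoc]
      refine mul_le_mul_of_nonneg_right (mul_le_mul_of_nonneg_left ?_ h.D_nonneg) (hs0 _)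
      exact pow_le_pow_of_le_one h.mu_inv_nonneg (inv_le_one_of_one_le₀ h.one_lt_mu.le) k.le_succ
  have hF₁ := B.mem_tsum_pow_mul_shift hy h.lam_nonneg h.lam_lt_one fun k => -k
  have hF₂ := B.mem_tsum_pow_mul_shift hy h.mu_inv_nonneg h.mu_inv_lt_one fun k => (k + 1 : ℕ)
  refine B.mono_mem (B.add_mem (B.smul_mem D hF₁) (B.smul_mem D hF₂)) fun n => ?_
  change |nn n _| ≤ |D * F₁ n + D * F₂ n|
  rw [abs_of_nonneg ((h.norm n).nonneg _), abs_of_nonneg ((h.norm n).nonneg _ |>.trans (hbound n))]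
  exact hbound n

lemma eq_of_sub_apply_eq (h : IsExpDichotomy A nn P Ainv D lam mu) {x x' : ℤ → X} {M M' : ℝ}
    (hM : ∀ n, nn n (x n) ≤ M) (hM' : ∀ n, nn n (x' n) ≤ M')
    (hxx' : ∀ n, x n - A (n - 1) (x (n - 1)) = x' n - A (n - 1) (x' (n - 1))) : x = x' := by
  funext n
  refine sub_eq_zero.mp (h.eq_zero_of_bounded (z := x - x') (M := M + M') (fun m => ?_)
    (fun m => ((h.norm m).map_sub_le _ _).trans (add_le_add (hM m) (hM' m))) n)
  rw [Pi.sub_apply, Pi.sub_apply, map_sub, sub_eq_sub_iff_sub_eq_sub, hxx' m]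

end IsExpDichotomy

end

/-- If `(Aₘ)` admits an exponential dichotomy with respect to the norms `nn m` and `B` is
an admissible Banach sequence space, then `T_B` is bijective: for every `y ∈ Y_B` there is
a unique `x ∈ Y_B` with `xₙ - A_{n-1} x_{n-1} = yₙ` for all `n`. -/
theorem stmt14 (B : AdmissibleSeqSpace) {X : Type*} [NormedAddCommGroup X]
    [NormedSpace ℝ X] [CompleteSpace X]
    (A : ℤ → X →L[ℝ] X)
    (nn : ℤ → X → ℝ)
    (hnadd : ∀ (n : ℤ) (u v : X), nn n (u + v) ≤ nn n u + nn n v)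
    (hnsmul : ∀ (n : ℤ) (c : ℝ) (v : X), nn n (c • v) = |c| * nn n v)
    (heq : ∀ n : ℤ, ∃ c C : ℝ, 0 < c ∧ 0 < C ∧
      ∀ v : X, c * ‖v‖ ≤ nn n v ∧ nn n v ≤ C * ‖v‖)
    (P : ℤ → X →L[ℝ] X)
    (hproj : ∀ (m : ℤ) (v : X), P m (P m v) = P m v)
    (hcomm : ∀ (m : ℤ) (v : X), A m (P m v) = P (m + 1) (A m v))
    (hbij : ∀ m : ℤ, Set.BijOn (A m) {v : X | P m v = 0} {v : X | P (m + 1) v = 0})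
    (D lam mu : ℝ) (hD : 0 < D) (hlam0 : 0 < lam) (hlam1 : lam < 1) (hmu : 1 < mu)
    (hstable : ∀ (m : ℤ) (v : X) (k : ℕ),
      nn (m + k) (opComp A k m (P m v)) ≤ D * lam ^ k * nn m v)
    (Ainv : ℕ → ℤ → X → X)
    (hAinv_ker : ∀ (k : ℕ) (m : ℤ) (v : X), P m v = 0 → P (m - k) (Ainv k m v) = 0)
    (hAinv_comp : ∀ (k : ℕ) (m : ℤ) (v : X), P m v = 0 → opComp A k (m - k) (Ainv k m v) = v)
    (hunstable : ∀ (k : ℕ) (m : ℤ) (v : X),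
      nn (m - k) (Ainv k m (v - P m v)) ≤ D * (mu ^ k)⁻¹ * nn m v) :
    ∀ y : ℤ → X, B.mem (fun n => nn n (y n)) →
      ∃! x : ℤ → X, B.mem (fun n => nn n (x n)) ∧
        ∀ n : ℤ, x n - A (n - 1) (x (n - 1)) = y n := by
  have hd : IsExpDichotomy A nn P Ainv D lam mu :=
    { norm := fun n =>
        ⟨hnadd n, hnsmul n, by obtain ⟨c, C, hc, -, h⟩ := heq n; exact ⟨c, C, hc, h⟩⟩
      proj := hproj
      comm := hcomm
      injOn := fun m => (hbij m).injOn
      D_nonneg := hD.le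
      lam_nonneg := hlam0.le
      lam_lt_one := hlam1
      one_lt_mu := hmu
      stable := hstable
      inv_ker := hAinv_ker
      opComp_inv := hAinv_comp
      unstable := hunstable }
  intro y hy
  obtain ⟨M, hM⟩ := B.exists_forall_le hy
  have hsol := hd.greenSol_sub_apply hM
  have hmem := hd.mem_greenSol B hy
  refine ⟨greenSol A P Ainv y, ⟨hmem, hsol⟩, ?_⟩
  rintro x ⟨hx, hxy⟩
  obtain ⟨Mx, hMx⟩ := B.exists_forall_le hx
  obtain ⟨Mg, hMg⟩ := B.exists_forall_le hmem
  exact hd.eq_of_sub_apply_eq hMx hMg fun n => (hxy n).trans (hsol n).symm
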